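/- arXiv:2411.06006 — 2 statements merged into one kernel-verified Lean document; each statement's English description precedes it below -/
import Mathlib

section
/- There is a universal constant C > 0 such that for every finite set V with |V| ≥ 2 and every probability distribution q on V, d(q, U) ≥ (C / log |V|) · ENT(q), where U is the uniform distribution on V, ENT(q) = Σ_i q_i log(|V| q_i), and d(q,U) = Σ_i [½ q_i log q_i + ½ (1/|V|) log(1/|V|) − ((q_i + 1/|V|)/2) log((q_i + 1/|V|)/2)]. -/
/-!
Put `n = |V|` and `t_i = n q_i ∈ [0, n]`. Then `n ENT(q) = ∑ klFun t_i` (the linear terms of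
`klFun` cancel because `∑ t_i = n`) and `n d(q, U) = ∑ jsFun t_i`, where `jsFun t` is the
Jensen gap of `x log x` at `t` and `1`. So it suffices to prove `klFun t ≤ 32 (1 + log n) jsFun t`
for `0 ≤ t ≤ n`, and then `1 + log n ≤ 4 log n` since `n ≥ 2`.

Writing the Jensen gap as the mean of the two KL gaps to the midpoint `m = (t + 1) / 2`, whose
ratios `t / m` and `1 / m` lie in `[0, 2]` where `klFun'' ≥ 1 / 2`, gives
`jsFun t ≥ (t - 1)² / (8 (t + 1))`. Against this, `klFun t ≤ (t - 1)²` for `t ≤ 1`, and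
`klFun t ≤ (t - 1) log t ≤ 4 (1 + log t) (t - 1)² / (t + 1)` for `t ≥ 1`.
-/

open Finset Real InformationTheory Set

theorem isMinOn_Icc_of_hasDerivAt_nonpos_of_nonneg {f f' : ℝ → ℝ} {a b c : ℝ}
    (hc : c ∈ Icc a b) (hf : ContinuousOn f (Icc a b))
    (hf' : ∀ x ∈ Ioo a b, HasDerivAt f (f' x) x)
    (hleft : ∀ x ∈ Ioo a c, f' x ≤ 0) (hright : ∀ x ∈ Ioo c b, 0 ≤ f' x) :
    IsMinOn f (Icc a b) c := by
  intro x hx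
  rcases le_total x c with hxc | hcx
  · have hanti : AntitoneOn f (Icc a c) := by
      refine antitoneOn_of_hasDerivWithinAt_nonpos (f' := f') (convex_Icc a c)
        (hf.mono (Icc_subset_Icc_right hc.2)) (fun y hy => ?_) (fun y hy => ?_)
      · rw [interior_Icc] at hy
        exact (hf' y ⟨hy.1, hy.2.trans_le hc.2⟩).hasDerivWithinAt
      · rw [interior_Icc] at hy
        exact hleft y hy
    exact hanti ⟨hx.1, hxc⟩ ⟨hc.1, le_rfl⟩ hxc
  · have hmono : MonotoneOn f (Icc c b) := by
      refine monotoneOn_of_hasDerivWithinAt_nonneg (f' := f') (convex_Icc c b)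
        (hf.mono (Icc_subset_Icc_left hc.1)) (fun y hy => ?_) (fun y hy => ?_)
      · rw [interior_Icc] at hy
        exact (hf' y ⟨hc.1.trans_lt hy.1, hy.2⟩).hasDerivWithinAt
      · rw [interior_Icc] at hy
        exact hright y hy
    exact hmono ⟨le_rfl, hc.2⟩ ⟨hcx, hx.2⟩ hcx

theorem sq_sub_one_div_le_klFun {M x : ℝ} (hM : 1 ≤ M) (hx₀ : 0 ≤ x) (hxM : x ≤ M) :
    (x - 1) ^ 2 / (2 * M) ≤ klFun x := by
  have hM0 : 0 < M := one_pos.trans_le hM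
  have hmin : IsMinOn (fun y => klFun y - (y - 1) ^ 2 / (2 * M)) (Icc 0 M) 1 := by
    refine isMinOn_Icc_of_hasDerivAt_nonpos_of_nonneg (f' := fun y => log y - (y - 1) / M)
      ⟨zero_le_one, hM⟩ (by fun_prop) (fun y hy => ?_) (fun y hy => ?_) (fun y hy => ?_)
    · have hsq : HasDerivAt (fun y => (y - 1) ^ 2 / (2 * M)) ((y - 1) / M) y := by
        refine ((((hasDerivAt_id y).sub_const 1).fun_pow 2).div_const (2 * M)).congr_deriv ?_
        simp only [Nat.cast_ofNat, id_eq, Nat.add_one_sub_one, pow_one, mul_one]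
        field_simp
      exact (hasDerivAt_klFun hy.1.ne').sub hsq
    · have h1 := log_le_sub_one_of_pos hy.1
      have h2 : y - 1 ≤ (y - 1) / M := by
        rw [le_div_iff₀ hM0]
        nlinarith [hy.2]
      linarith
    · have h1 := one_sub_inv_le_log_of_pos (one_pos.trans hy.1)
      have h2 : (y - 1) / M ≤ 1 - y⁻¹ := by
        have hy0 : 0 < y := one_pos.trans hy.1
        rw [show 1 - y⁻¹ = (y - 1) / y by field_simp]
        exact div_le_div_of_nonneg_left (by linarith [hy.1]) hy0 hy.2.le
      linarith
  have h := hmin ⟨hx₀, hxM⟩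
  norm_num [klFun_one] at h
  linarith

noncomputable def jsFun (t : ℝ) : ℝ := t * log t / 2 - (t + 1) / 2 * log ((t + 1) / 2)

theorem jsFun_eq_klFun_add {t : ℝ} (ht : 0 ≤ t) :
    jsFun t = (t + 1) / 4 * (klFun (2 * t / (t + 1)) + klFun (2 / (t + 1))) := by
  have ht1 : 0 < t + 1 := by linarith
  rcases ht.eq_or_lt with rfl | ht0
  · simp only [jsFun, klFun]
    rw [show ((0 : ℝ) + 1) / 2 = 2⁻¹ by norm_num, log_inv]
    norm_num
    ring
  · simp only [jsFun, klFun]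
    rw [log_div (by positivity) ht1.ne', log_div two_ne_zero ht1.ne', log_div ht1.ne' two_ne_zero,
      log_mul two_ne_zero ht0.ne']
    field_simp
    ring

theorem sq_sub_one_le_jsFun {t : ℝ} (ht : 0 ≤ t) : (t - 1) ^ 2 ≤ 8 * (t + 1) * jsFun t := by
  have ht1 : 0 < t + 1 := by linarith
  have h1 := sq_sub_one_div_le_klFun one_le_two
    (x := 2 * t / (t + 1)) (by positivity) (by rw [div_le_iff₀ ht1]; linarith)
  have h2 := sq_sub_one_div_le_klFun one_le_two
    (x := 2 / (t + 1)) (by positivity) (by rw [div_le_iff₀ ht1]; linarith)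
  have e1 : 2 * t / (t + 1) - 1 = (t - 1) / (t + 1) := by field_simp; ring
  have e2 : 2 / (t + 1) - 1 = -((t - 1) / (t + 1)) := by field_simp; ring
  rw [e1] at h1
  rw [e2, neg_sq] at h2
  calc (t - 1) ^ 2 = 8 * (t + 1) * ((t + 1) / 4 * (((t - 1) / (t + 1)) ^ 2 / 2)) := by
        field_simp
        ring
    _ ≤ 8 * (t + 1) * ((t + 1) / 4 * (klFun (2 * t / (t + 1)) + klFun (2 / (t + 1)))) := by
        gcongr
        linarith
    _ = 8 * (t + 1) * jsFun t := by rw [jsFun_eq_klFun_add ht]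

theorem jsFun_nonneg {t : ℝ} (ht : 0 ≤ t) : 0 ≤ jsFun t :=
  nonneg_of_mul_nonneg_right ((sq_nonneg _).trans (sq_sub_one_le_jsFun ht)) (by linarith)

theorem klFun_le_sq_sub_one {t : ℝ} (ht : 0 ≤ t) (ht1 : t ≤ 1) : klFun t ≤ (t - 1) ^ 2 := by
  rcases ht.eq_or_lt with rfl | ht0
  · simp [klFun_zero]
  · have := mul_le_mul_of_nonneg_left (log_le_sub_one_of_pos ht0) ht
    rw [klFun]
    nlinarith

theorem klFun_le_sub_one_mul_log {t : ℝ} (ht : 0 < t) : klFun t ≤ (t - 1) * log t := by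
  have := log_le_sub_one_of_pos ht
  rw [klFun]
  nlinarith

theorem add_one_mul_log_le {t : ℝ} (ht : 1 ≤ t) :
    (t + 1) * log t ≤ 4 * (1 + log t) * (t - 1) := by
  have hlog := log_nonneg ht
  rcases le_total t 3 with h3 | h3
  · nlinarith [log_le_sub_one_of_pos (one_pos.trans_le ht)]
  · nlinarith

theorem klFun_mul_add_one_le {t L : ℝ} (ht : 0 ≤ t) (hL : 0 ≤ L) (htL : log t ≤ L) :
    klFun t * (t + 1) ≤ 4 * (1 + L) * (t - 1) ^ 2 := by
  rcases le_total t 1 with h1 | h1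
  · have := klFun_le_sq_sub_one ht h1
    have := klFun_nonneg ht
    nlinarith [sq_nonneg (t - 1)]
  · have hk := klFun_le_sub_one_mul_log (one_pos.trans_le h1)
    have := add_one_mul_log_le h1
    nlinarith

theorem klFun_le_mul_jsFun {t L : ℝ} (ht : 0 ≤ t) (hL : 0 ≤ L) (htL : log t ≤ L) :
    klFun t ≤ 32 * (1 + L) * jsFun t := by
  have h1 := klFun_mul_add_one_le ht hL htL
  have h2 := sq_sub_one_le_jsFun ht
  have : 0 < t + 1 := by linarith
  nlinarith

theorem sum_klFun_card_mul {V : Type*} [Fintype V] {q : V → ℝ} (hq : ∑ i, q i = 1) :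
    ∑ i, klFun (Fintype.card V * q i) =
      Fintype.card V * ∑ i, q i * log (Fintype.card V * q i) := by
  simp only [klFun, sum_sub_distrib, sum_add_distrib, sum_const, card_univ, nsmul_eq_mul,
    mul_one, ← mul_sum, hq, mul_assoc, add_sub_cancel_right]

theorem mixture_gap_eq_jsFun {n q : ℝ} (hn : 0 < n) (hq : 0 ≤ q) :
    1 / 2 * (q * log q) + 1 / 2 * (1 / n * log (1 / n)) - (q + 1 / n) / 2 * log ((q + 1 / n) / 2)
      = jsFun (n * q) / n := by
  have hm : 0 < (q + 1 / n) / 2 := by positivity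
  have e : (n * q + 1) / 2 = n * ((q + 1 / n) / 2) := by field_simp
  rw [jsFun, e, log_mul hn.ne' hm.ne', one_div n, log_inv]
  rcases hq.eq_or_lt with rfl | hq0
  · simp only [log_zero, mul_zero, zero_add, zero_div, zero_sub]
    field_simp
    ring
  · rw [log_mul hn.ne' hq0.ne']
    field_simp
    ring

/-- There is a universal constant `C > 0` such that for every finite set `V` with
`|V| ≥ 2` and every probability distribution `q` on `V`,
`d(q, U) ≥ (C / log |V|) · ENT(q)` where `U` is uniform on `V`. -/
theorem d_uniform_entropy_bound :
    ∃ C : ℝ, 0 < C ∧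
      ∀ (V : Type) (_ : Fintype V), 2 ≤ Fintype.card V →
        ∀ q : V → ℝ, (∀ i, 0 ≤ q i) → ∑ i, q i = 1 →
          (C / Real.log (Fintype.card V)) *
              (∑ i, q i * Real.log ((Fintype.card V : ℝ) * q i))
            ≤ ∑ i, ((1 / 2) * (q i * Real.log (q i))
                + (1 / 2) * ((1 / (Fintype.card V : ℝ)) * Real.log (1 / (Fintype.card V : ℝ)))
                - ((q i + 1 / (Fintype.card V : ℝ)) / 2)
                    * Real.log ((q i + 1 / (Fintype.card V : ℝ)) / 2)) := by
  refine ⟨1 / 128, by norm_num, fun V _ hcard q hq hsum => ?_⟩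
  have hn : (2 : ℝ) ≤ Fintype.card V := by exact_mod_cast hcard
  set n : ℝ := (Fintype.card V : ℝ)
  have hn0 : 0 < n := by linarith
  have hL : 1 / 3 < log n :=
    (show (1 / 3 : ℝ) < log 2 by linarith [log_two_gt_d9]).trans_le (log_le_log two_pos hn)
  have hnq (i : V) : 0 ≤ n * q i := mul_nonneg hn0.le (hq i)
  have hpoint (i : V) : klFun (n * q i) ≤ 32 * (1 + log n) * jsFun (n * q i) := by
    refine klFun_le_mul_jsFun (hnq i) (by linarith) ?_
    rcases (hq i).eq_or_lt with h0 | h0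
    · rw [← h0, mul_zero, log_zero]
      linarith
    · exact log_le_log (mul_pos hn0 h0) (mul_le_of_le_one_right hn0.le
        (hsum ▸ single_le_sum (fun j _ => hq j) (mem_univ i)))
  have hent : n * ∑ i, q i * log (n * q i) ≤ 128 * log n * ∑ i, jsFun (n * q i) := by
    rw [← sum_klFun_card_mul hsum, mul_sum]
    exact sum_le_sum fun i _ => (hpoint i).trans
      (mul_le_mul_of_nonneg_right (by linarith) (jsFun_nonneg (hnq i)))
  rw [sum_congr rfl fun i _ => mixture_gap_eq_jsFun hn0 (hq i), ← sum_div,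
    div_mul_eq_mul_div, div_le_div_iff₀ (by linarith) hn0]
  linarith
end

section
/- Mod-n second moment lemma: fix n ≥ 1 and for a ∈ Z define |a|_n = min(a mod n, (n−a) mod n), and for s = (s₁,s₂) ∈ Z² define |||s|||₂² = |s₁|_n² + |s₂|_n². Let s ∈ Z² and let Δ = (Δ₁, Δ₂) be an integrable random vector in Z² with E Δ₁ = E Δ₂ = 0. Then E[|||s + Δ|||₂²] ≤ |||s|||₂² + E[Δ₁²] + E[Δ₂²]. -/
/-!
Let `r` be the representative of `s` modulo `n` of least absolute value, so `|r| = |s|_n`.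
Since `s + Δ ≡ r + Δ`, pointwise `|s + Δ|_n ≤ |r + Δ|`, and for centred `Δ` the cross term of
`E (r + Δ)²` vanishes: `E (r + Δ)² = r² + E Δ²`. Adding the two coordinates gives the bound.
-/

open MeasureTheory

/-- `|a|_n`: the distance from `a` to the nearest multiple of `n`. -/
def absn (n : ℕ) (a : ℤ) : ℤ := min (a % (n : ℤ)) (((n : ℤ) - a) % (n : ℤ))

lemma ZMod.natAbs_valMinAbs_le_natAbs {n : ℕ} [NeZero n] {x : ZMod n} {y : ℤ}
    (h : (y : ZMod n) = x) : x.valMinAbs.natAbs ≤ y.natAbs :=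
  natAbs_min_of_le_div_two n _ _ (by rw [coe_valMinAbs, h]) (natAbs_valMinAbs_le x)

lemma absn_eq_natAbs_valMinAbs (n : ℕ) [NeZero n] (a : ℤ) :
    absn n a = (a : ZMod n).valMinAbs.natAbs := by
  have hn : (0 : ℤ) < n := by exact_mod_cast Nat.pos_of_neZero n
  have hval : ((a : ZMod n).val : ℤ) = a % n := ZMod.val_intCast a
  have hlt := (a : ZMod n).val_lt
  have hneg : ((n : ℤ) - a) % n = (n - a % n) % n := Int.sub_emod _ _ _ ▸ by simp
  rw [ZMod.valMinAbs_natAbs_eq_min, absn, hneg, Nat.cast_min, Nat.cast_sub hlt.le, hval]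
  rcases eq_or_ne (a % n) 0 with h | h
  · simp [h]
  · rw [Int.emod_eq_of_lt (a := n - a % n) (by omega) (by omega)]

lemma exists_sq_absn_add_le (n : ℕ) [NeZero n] (a : ℤ) :
    ∃ r : ℤ, r ^ 2 = absn n a ^ 2 ∧ ∀ d, absn n (a + d) ^ 2 ≤ (r + d) ^ 2 := by
  refine ⟨(a : ZMod n).valMinAbs, ?_, fun d => ?_⟩
  · rw [absn_eq_natAbs_valMinAbs, Int.natCast_natAbs, sq_abs]
  · rw [absn_eq_natAbs_valMinAbs, Int.natCast_natAbs, sq_abs, ← Int.natAbs_le_iff_sq_le]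
    exact ZMod.natAbs_valMinAbs_le_natAbs (by simp)

section

variable {Ω : Type*} [MeasurableSpace Ω] {μ : Measure Ω} {X : Ω → ℝ}

lemma integrable_const_add_sq [IsFiniteMeasure μ] (hX : Integrable X μ)
    (hX2 : Integrable (fun ω => X ω ^ 2) μ) (c : ℝ) :
    Integrable (fun ω => (c + X ω) ^ 2) μ := by
  simp_rw [add_sq]
  exact ((integrable_const _).add (hX.const_mul _)).add hX2

lemma integral_const_add_sq [IsProbabilityMeasure μ] (hX : Integrable X μ)
    (hX2 : Integrable (fun ω => X ω ^ 2) μ) (h0 : ∫ ω, X ω ∂μ = 0) (c : ℝ) :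
    ∫ ω, (c + X ω) ^ 2 ∂μ = c ^ 2 + ∫ ω, X ω ^ 2 ∂μ := by
  have hlin : Integrable (fun ω => 2 * c * X ω) μ := hX.const_mul _
  have haff : Integrable (fun ω => c ^ 2 + 2 * c * X ω) μ := (integrable_const _).add hlin
  simp_rw [add_sq]
  rw [integral_add haff hX2, integral_add (integrable_const _) hlin,
    integral_const_mul, h0]
  simp

end

theorem modn_second_moment_general {Ω : Type*} [MeasurableSpace Ω]
    (μ : Measure Ω) [IsProbabilityMeasure μ]
    (n : ℕ) (hn : 1 ≤ n) (s₁ s₂ : ℤ) (Δ₁ Δ₂ : Ω → ℤ)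
    (hint₁ : Integrable (fun ω => ((Δ₁ ω : ℝ))) μ)
    (hint₂ : Integrable (fun ω => ((Δ₂ ω : ℝ))) μ)
    (hsq₁ : Integrable (fun ω => ((Δ₁ ω : ℝ)) ^ 2) μ)
    (hsq₂ : Integrable (fun ω => ((Δ₂ ω : ℝ)) ^ 2) μ)
    (hE₁ : ∫ ω, ((Δ₁ ω : ℝ)) ∂μ = 0)
    (hE₂ : ∫ ω, ((Δ₂ ω : ℝ)) ∂μ = 0) :
    ∫ ω, (((absn n (s₁ + Δ₁ ω)) ^ 2 + (absn n (s₂ + Δ₂ ω)) ^ 2 : ℤ) : ℝ) ∂μ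
      ≤ (((absn n s₁) ^ 2 + (absn n s₂) ^ 2 : ℤ) : ℝ)
        + ∫ ω, ((Δ₁ ω : ℝ)) ^ 2 ∂μ + ∫ ω, ((Δ₂ ω : ℝ)) ^ 2 ∂μ := by
  have : NeZero n := ⟨by omega⟩
  obtain ⟨r₁, hr₁, hle₁⟩ := exists_sq_absn_add_le n s₁
  obtain ⟨r₂, hr₂, hle₂⟩ := exists_sq_absn_add_le n s₂
  have hi₁ := integrable_const_add_sq hint₁ hsq₁ (r₁ : ℝ)
  have hi₂ := integrable_const_add_sq hint₂ hsq₂ (r₂ : ℝ)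
  calc ∫ ω, (((absn n (s₁ + Δ₁ ω)) ^ 2 + (absn n (s₂ + Δ₂ ω)) ^ 2 : ℤ) : ℝ) ∂μ
      ≤ ∫ ω, (((r₁ : ℝ) + Δ₁ ω) ^ 2 + ((r₂ : ℝ) + Δ₂ ω) ^ 2) ∂μ := by
        refine integral_mono_of_nonneg (.of_forall fun ω => by positivity) (hi₁.add hi₂)
          (.of_forall fun ω => ?_)
        dsimp only
        exact_mod_cast add_le_add (hle₁ (Δ₁ ω)) (hle₂ (Δ₂ ω))
    _ = _ := by
        rw [integral_add hi₁ hi₂, integral_const_add_sq hint₁ hsq₁ hE₁,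
          integral_const_add_sq hint₂ hsq₂ hE₂]
        push_cast [← hr₁, ← hr₂]
        ring

/-- Mod-`n` second moment lemma: if `Δ = (Δ₁, Δ₂)` is a centered integrable random
vector in `ℤ²`, then `E[|||s + Δ|||₂²] ≤ |||s|||₂² + E[Δ₁²] + E[Δ₂²]`. -/
theorem modn_second_moment {Ω : Type*} [MeasurableSpace Ω]
    (μ : Measure Ω) [IsProbabilityMeasure μ]
    (n : ℕ) (hn : 1 ≤ n) (s₁ s₂ : ℤ) (Δ₁ Δ₂ : Ω → ℤ)
    (hm₁ : Measurable Δ₁) (hm₂ : Measurable Δ₂)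
    (hint₁ : Integrable (fun ω => ((Δ₁ ω : ℝ))) μ)
    (hint₂ : Integrable (fun ω => ((Δ₂ ω : ℝ))) μ)
    (hsq₁ : Integrable (fun ω => ((Δ₁ ω : ℝ)) ^ 2) μ)
    (hsq₂ : Integrable (fun ω => ((Δ₂ ω : ℝ)) ^ 2) μ)
    (hE₁ : ∫ ω, ((Δ₁ ω : ℝ)) ∂μ = 0)
    (hE₂ : ∫ ω, ((Δ₂ ω : ℝ)) ∂μ = 0) :
    ∫ ω, (((absn n (s₁ + Δ₁ ω)) ^ 2 + (absn n (s₂ + Δ₂ ω)) ^ 2 : ℤ) : ℝ) ∂μ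
      ≤ (((absn n s₁) ^ 2 + (absn n s₂) ^ 2 : ℤ) : ℝ)
        + ∫ ω, ((Δ₁ ω : ℝ)) ^ 2 ∂μ + ∫ ω, ((Δ₂ ω : ℝ)) ^ 2 ∂μ :=
  modn_second_moment_general μ n hn s₁ s₂ Δ₁ Δ₂ hint₁ hint₂ hsq₁ hsq₂ hE₁ hE₂
end
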